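/- Let (Ω, F, (F_n), P) be a filtered atomic probability space in which distinct atoms of 𝒜 have distinct measures, with associated collections 𝒜 and ℰ. Let 0 < ε < 1/2, let k ∈ ℕ with k > −log₂(ε), and let Y_0 = A ∈ 𝒜 satisfy P((G_k(ℰ, A))*) > (1 − ε/2) P(A). Let 0 < m < k and let {Y_j}_{j=0}^m satisfy condition D_m(Y_0). Then: (a) if ∑_{j=1}^m P(U_j*) + P((G_1(ℰ, Y_m))*) > (1/2) P(A), there exists Y_{m+1} ∈ G_1(ℰ, Y_m) such that {Y_j}_{j=0}^{m+1} satisfies condition D_{m+1}(Y_0); (b) if ∑_{j=1}^m P(U_j*) + P((G_1(ℰ, Y_m))*) ≤ (1/2) P(A), there exists W ∈ 𝒜 with W ⊊ Y_m such that, setting U_{m+1} = {B ∈ G_1(ℰ, Y_m) : B ≺ W} and Y_{m+1} = Y_m \ U_{m+1}*, one has (1/2 − ε) P(A) ≤ ∑_{j=1}^{m+1} P(U_j*) ≤ (1/2) P(A) and P(Y_{m+1}) ≤ ε P(A). -/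

import Mathlib

open MeasureTheory ENNReal

noncomputable section

namespace Paper

/-- A filtered atomic probability space structure on `(Ω, m0, P)`:
an increasing sequence of finite measurable partitions `part n` of `Ω` into atoms of
positive measure (with `part 0 = {univ}`, so that the `0`-th σ-algebra is trivial),
generating the ambient σ-algebra, together with a choice `star n A` of a child of
maximal measure for every atom `A` of `part n`. -/
structure FilteredAtomic (Ω : Type*) [m0 : MeasurableSpace Ω] (P : Measure Ω) where
  part : ℕ → Finset (Set Ω)
  part_zero : part 0 = {Set.univ}
  meas : ∀ n, ∀ A ∈ part n, MeasurableSet A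
  pos : ∀ n, ∀ A ∈ part n, 0 < P A
  disj : ∀ n, (part n : Set (Set Ω)).PairwiseDisjoint id
  cover : ∀ n, ⋃₀ (part n : Set (Set Ω)) = Set.univ
  refined : ∀ n, ∀ A ∈ part (n + 1), ∃ B ∈ part n, A ⊆ B
  gen : m0 = ⨆ n, MeasurableSpace.generateFrom (part n : Set (Set Ω))
  star : ℕ → Set Ω → Set Ω
  star_mem : ∀ n, ∀ A ∈ part n, star n A ∈ part (n + 1)
  star_sub : ∀ n, ∀ A ∈ part n, star n A ⊆ A
  star_max : ∀ n, ∀ A ∈ part n, ∀ B ∈ part (n + 1), B ⊆ A → P B ≤ P (star n A)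

variable {Ω : Type*} [m0 : MeasurableSpace Ω] {P : Measure Ω}

/-- The filtration `F_n` generated by the atoms of the `n`-th partition
(`F_0` is the trivial σ-algebra since `part 0 = {univ}`). -/
def FilteredAtomic.filt (F : FilteredAtomic Ω P) (n : ℕ) : MeasurableSpace Ω :=
  MeasurableSpace.generateFrom (F.part n : Set (Set Ω))

/-- The collection 𝒜 of all atoms. -/
def FilteredAtomic.atoms (F : FilteredAtomic Ω P) : Set (Set Ω) :=
  ⋃ n, (F.part n : Set (Set Ω))

/-- The collection 𝒞 = {star A : A ∈ 𝒜}. -/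
def FilteredAtomic.starSets (F : FilteredAtomic Ω P) : Set (Set Ω) :=
  {B | ∃ n, ∃ A ∈ F.part n, B = F.star n A}

/-- The collection ℰ = 𝒜 \ 𝒞. -/
def FilteredAtomic.eColl (F : FilteredAtomic Ω P) : Set (Set Ω) :=
  F.atoms \ F.starSets

/-- The collection ℬ = {Ã : A ∈ 𝒜, P(Ã) > 0}, where Ã = A \ star A. -/
def FilteredAtomic.bColl (F : FilteredAtomic Ω P) : Set (Set Ω) :=
  {S | (∃ n, ∃ A ∈ F.part n, S = A \ F.star n A) ∧ 0 < P S}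

/-- The Carleson constant [[R]] of a collection of sets. -/
def carleson (P : Measure Ω) (R : Set (Set Ω)) : ℝ≥0∞ :=
  ⨆ I ∈ R, (P I)⁻¹ * ∑' J : {J : Set Ω // J ∈ R ∧ J ⊆ I}, P (J : Set Ω)

/-- A collection is nested if any two members are disjoint or comparable. -/
def Nested (R : Set (Set Ω)) : Prop :=
  ∀ A ∈ R, ∀ B ∈ R, (A ∩ B).Nonempty → A ⊆ B ∨ B ⊆ A

/-- `G1 R A`: the maximal members of `R` strictly contained in `A`. -/
def G1 (R : Set (Set Ω)) (A : Set Ω) : Set (Set Ω) :=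
  {B | B ∈ R ∧ B ⊂ A ∧ ∀ C ∈ R, C ⊂ A → B ⊆ C → B = C}

/-- `Gk R k A`: the `k`-th generation of `R` inside `A`. -/
def Gk (R : Set (Set Ω)) : ℕ → Set Ω → Set (Set Ω)
  | 0, A => {A}
  | k + 1, A => ⋃ J ∈ Gk R k A, G1 R J

/-- Martingale difference `E[f|F_{n+1}] - E[f|F_n]`; with the present indexing this is the
paper's `Δ_{n+1} f`, so `fun n => F.mdiff f n` enumerates `Δ_1 f, Δ_2 f, …`. -/
def FilteredAtomic.mdiff (F : FilteredAtomic Ω P) {X : Type*} [NormedAddCommGroup X]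
    [NormedSpace ℝ X] [CompleteSpace X] (f : Ω → X) (n : ℕ) : Ω → X :=
  P[f|F.filt (n + 1)] - P[f|F.filt n]

/-- `(‖E f‖^p + ∑_{n ≥ 1} ‖E[f|F_n] - E[f|F_{n-1}]‖_{L^p}^p)^{1/p}` as an `ℝ≥0∞` number. -/
def FilteredAtomic.mtBound (F : FilteredAtomic Ω P) {X : Type*} [NormedAddCommGroup X]
    [NormedSpace ℝ X] [CompleteSpace X] (f : Ω → X) (p : ℝ) : ℝ≥0∞ :=
  ((‖∫ ω, f ω ∂P‖₊ : ℝ≥0∞) ^ p +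
    ∑' n : ℕ, eLpNorm (F.mdiff f n) (ENNReal.ofReal p) P ^ p) ^ (1 / p)

/-- `M` is a scalar martingale type `p` constant for the filtered space. -/
def ScalarMT (F : FilteredAtomic Ω P) (p M : ℝ) : Prop :=
  1 ≤ M ∧ ∀ g : Ω → ℝ, MemLp g (ENNReal.ofReal p) P →
    eLpNorm g (ENNReal.ofReal p) P ≤ ENNReal.ofReal M * F.mtBound g p

/-- The dyadic interval `[k/2^n, (k+1)/2^n) ⊆ [0,1)` (for `k < 2^n`). -/
def dyadic (n k : ℕ) : Set ℝ := Set.Ico ((k : ℝ) / 2 ^ n) (((k : ℝ) + 1) / 2 ^ n)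

/-- The Haar function `h_I = 1_{I⁺} - 1_{I⁻}` of the dyadic interval `I = [k/2^n, (k+1)/2^n)`. -/
def haarFn (n k : ℕ) : ℝ → ℝ :=
  (dyadic (n + 1) (2 * k)).indicator 1 - (dyadic (n + 1) (2 * k + 1)).indicator 1

/-- `X` has Haar type `p` with constant `C`: for every finitely supported family of vectors
indexed by dyadic subintervals of `[0,1)` (encoded as pairs `(n,k)` with `k < 2^n`),
`‖∑ x_I h_I‖_{L^p([0,1);X)} ≤ C (∑ ‖x_I‖^p |I|)^{1/p}`. -/
def HaarTypeWith (X : Type*) [NormedAddCommGroup X] [NormedSpace ℝ X] (p C : ℝ) : Prop :=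
  ∀ s : Finset (ℕ × ℕ), (∀ q ∈ s, q.2 < 2 ^ q.1) → ∀ x : ℕ × ℕ → X,
    (∫ t in Set.Ico (0 : ℝ) 1, ‖∑ q ∈ s, haarFn q.1 q.2 t • x q‖ ^ p) ^ (1 / p) ≤
      C * (∑ q ∈ s, ‖x q‖ ^ p * ((2 : ℝ) ^ q.1)⁻¹) ^ (1 / p)

/-- The order `≺` on atoms: earlier generation first, and within a generation larger
measure first. -/
def Prec (F : FilteredAtomic Ω P) (B₁ B₂ : Set Ω) : Prop :=
  ∃ l m : ℕ, B₁ ∈ F.part l ∧ B₂ ∈ F.part m ∧ (l < m ∨ (l = m ∧ P B₂ < P B₁))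

/-- `U_j = {B ∈ G_1(ℰ, Y_{j-1}) : B ≺ Y_j}`. -/
def Uset (F : FilteredAtomic Ω P) (Y : ℕ → Set Ω) (j : ℕ) : Set (Set Ω) :=
  {B | B ∈ G1 F.eColl (Y (j - 1)) ∧ Prec F B (Y j)}

/-- The sequence `Y` satisfies condition `D_m(A)`. -/
def CondD (F : FilteredAtomic Ω P) (A : Set Ω) (Y : ℕ → Set Ω) (m : ℕ) : Prop :=
  Y 0 = A ∧ (∀ j ∈ Finset.Icc 1 m, Y j ∈ G1 F.eColl (Y (j - 1))) ∧
    ∑ j ∈ Finset.Icc 1 m, P (⋃₀ Uset F Y j) ≤ 2⁻¹ * P A ∧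
    2⁻¹ * P A ≤ P (Y m) + ∑ j ∈ Finset.Icc 1 m, P (⋃₀ Uset F Y j)

/-- The collection ℰ supports all initial segments of a generalized Haar system with
constant `K`.  Dyadic intervals in `𝒟_n` are encoded as pairs `(j,k)`, `j ≤ n`, `k < 2^j`,
corresponding to `[k/2^j, (k+1)/2^j)`; `ε = δ·2^{-n-1}`. -/
def SupportsHaar (F : FilteredAtomic Ω P) (K : ℝ) : Prop :=
  0 < K ∧ ∀ (n : ℕ) (δ : ℝ), 0 < δ →
    ∃ (C : ℕ × ℕ → Set (Set Ω)) (g : ℕ × ℕ → Ω → ℝ) (A0 : Set Ω) (S : ℕ),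
      A0 ∈ F.eColl ∧
      -- (A1)
      C (0, 0) = {A0} ∧
      -- (A2)
      (∀ j k, j ≤ n → k < 2 ^ j → C (j, k) ⊆ {A | A ∈ F.eColl ∧ A ⊆ A0}) ∧
      -- (A3)
      (∀ j k, j ≤ n → k < 2 ^ j → (C (j, k)).PairwiseDisjoint id) ∧
      -- (A4)
      (∀ j k l i, j ≤ n → k < 2 ^ j → l ≤ n → i < 2 ^ l →
        ((⋃₀ C (j, k) ⊆ ⋃₀ C (l, i) ↔ dyadic j k ⊆ dyadic l i) ∧
          ((⋃₀ C (j, k) ∩ ⋃₀ C (l, i)).Nonempty ↔ (dyadic j k ∩ dyadic l i).Nonempty))) ∧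
      -- (A5)
      (∀ j k, j + 1 ≤ n → k < 2 ^ j →
        (∀ ω, g (j, k) ω ∈ Set.Icc (-1 : ℝ) 1) ∧
        Function.support (g (j, k)) ⊆ ⋃₀ C (j, k) ∧
        ⋃₀ C (j + 1, 2 * k) ⊆ {ω | g (j, k) ω = 1} ∧
        ⋃₀ C (j + 1, 2 * k + 1) ⊆ {ω | g (j, k) ω = -1}) ∧
      -- (A6)
      (∀ j k, j ≤ n → k < 2 ^ j → ∀ A ∈ C (j, k), MeasurableSet[F.filt S] A) ∧
      -- (A7)
      (∀ j k, j + 1 ≤ n → k < 2 ^ j → Measurable[F.filt S] (g (j, k))) ∧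
      -- (A8)
      (∀ A ∈ F.part S, ∀ m, 1 ≤ m → m ≤ S →
        ∀ j k j' k', j + 1 ≤ n → k < 2 ^ j → j' + 1 ≤ n → k' < 2 ^ j' →
          ¬ F.mdiff (g (j, k)) (m - 1) =ᵐ[P.restrict A] (0 : Ω → ℝ) →
          ¬ F.mdiff (g (j', k')) (m - 1) =ᵐ[P.restrict A] (0 : Ω → ℝ) →
          (j, k) = (j', k')) ∧
      -- (A9)
      (∀ j k, j + 1 ≤ n → k < 2 ^ j →
        ∑' i : ℕ, eLpNorm (F.mdiff (g (j, k)) i) 1 P ≤ ENNReal.ofReal K * P (⋃₀ C (j, k))) ∧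
      -- (A10)
      (∀ j k, j ≤ n → k < 2 ^ j →
        ENNReal.ofReal (((2 : ℝ) ^ j)⁻¹ - 2 * (δ * ((2 : ℝ) ^ (n + 1))⁻¹)) * P A0 ≤
            P (⋃₀ C (j, k)) ∧
          P (⋃₀ C (j, k)) ≤ ENNReal.ofReal (((2 : ℝ) ^ j)⁻¹) * P A0)

end Paper

/-!
Write `G = G₁(ℰ, Y_m)` and `S = ∑_{j ≤ m} P(U_j*)`. Since distinct atoms have distinct measures,
a member of `ℰ` lives in a single generation, so `≺` is a strict total order on `G` and is
well-founded on `ℰ` (lowest generation first, then largest measure among finitely many atoms).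

(a) Take for `Y_{m+1}` the `≺`-least `Z ∈ G` for which `P(⋃{B ∈ G : B ≺ Z} ∪ Z) ≥ P(A)/2 - S`.
The union of the sets `{B ∈ G : B ≺ Z}` is the directed union of the same sets for its members,
so by continuity of measure it has measure `≤ P(A)/2 - S`.

(b) Every point of `Y_m` outside `G*` lies in `A` but outside `G_k(ℰ, A)*`: this set has measure
at most `ε P(A)/2` by hypothesis. By continuity of measure, all of `G*` but a part of measure
`ε P(A)/2` lies in the members of `G` of the first `N` generations, and any atom `W ⊆ Y_m` of
generation `> N` comes after all of them in `≺`; `W ≠ Y_m` because `Y_m ∈ ℰ`.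
-/

open Set

section Predecessors

variable {Ω : Type*} [MeasurableSpace Ω] {μ : Measure Ω} {G : Set (Set Ω)}
  {r : Set Ω → Set Ω → Prop} {t : ℝ≥0∞}

theorem measure_sUnion_le_of_forall_measure_predecessors_union_le (hG : G.Countable)
    (htrans : ∀ a ∈ G, ∀ b ∈ G, ∀ c ∈ G, r a b → r b c → r a c)
    (htotal : ∀ a ∈ G, ∀ b ∈ G, a ≠ b → r a b ∨ r b a) {V : Set (Set Ω)} (hV : V ⊆ G)
    (h : ∀ Z ∈ V, μ (⋃₀ {B | B ∈ G ∧ r B Z} ∪ Z) ≤ t) : μ (⋃₀ V) ≤ t := by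
  set c : Set Ω → Set Ω := fun Z => ⋃₀ {B | B ∈ G ∧ r B Z} ∪ Z
  have hc : ∀ a ∈ G, ∀ b ∈ G, r a b → c a ⊆ c b := by
    intro a ha b hb hab
    refine union_subset (sUnion_subset fun B hB => ?_) ?_ <;>
      refine subset_union_of_subset_left ?_ _
    · exact subset_sUnion_of_mem ⟨hB.1, htrans B hB.1 a ha b hb hB.2 hab⟩
    · exact subset_sUnion_of_mem ⟨ha, hab⟩
  have : Countable V := (hG.mono hV).to_subtype
  have hdir : Directed (· ⊆ ·) fun Z : V => c Z := by
    rintro ⟨a, ha⟩ ⟨b, hb⟩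
    rcases eq_or_ne a b with rfl | hne
    · exact ⟨⟨a, ha⟩, subset_rfl, subset_rfl⟩
    rcases htotal a (hV ha) b (hV hb) hne with hab | hba
    · exact ⟨⟨b, hb⟩, hc a (hV ha) b (hV hb) hab, subset_rfl⟩
    · exact ⟨⟨a, ha⟩, subset_rfl, hc b (hV hb) a (hV ha) hba⟩
  calc μ (⋃₀ V) ≤ μ (⋃ Z : V, c Z) :=
        measure_mono fun x ⟨Z, hZ, hx⟩ => mem_iUnion.2 ⟨⟨Z, hZ⟩, Or.inr hx⟩
    _ = ⨆ Z : V, μ (c Z) := hdir.measure_iUnion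
    _ ≤ t := iSup_le fun Z => h Z Z.2

theorem exists_mem_measure_predecessors_le_and_le_add (hG : G.Countable)
    (htrans : ∀ a ∈ G, ∀ b ∈ G, ∀ c ∈ G, r a b → r b c → r a c)
    (htotal : ∀ a ∈ G, ∀ b ∈ G, a ≠ b → r a b ∨ r b a) (hwf : G.WellFoundedOn r)
    (ht : t < μ (⋃₀ G)) :
    ∃ Z ∈ G, μ (⋃₀ {B | B ∈ G ∧ r B Z}) ≤ t ∧ t ≤ μ (⋃₀ {B | B ∈ G ∧ r B Z}) + μ Z := by
  set S := {Z | Z ∈ G ∧ t ≤ μ (⋃₀ {B | B ∈ G ∧ r B Z} ∪ Z)}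
  have hS : S.Nonempty := by
    by_contra hS
    refine ht.not_ge (measure_sUnion_le_of_forall_measure_predecessors_union_le hG htrans htotal
      subset_rfl fun Z hZ => ?_)
    exact (not_le.1 fun h => hS ⟨Z, hZ, h⟩).le
  obtain ⟨Z, hZS, hmin⟩ := (wellFoundedOn_iff.1 hwf).has_min S hS
  refine ⟨Z, hZS.1, measure_sUnion_le_of_forall_measure_predecessors_union_le hG htrans htotal
    (fun B hB => hB.1) fun B hB => ?_, hZS.2.trans (measure_union_le _ _)⟩
  by_contra h
  exact hmin B ⟨hB.1, (not_le.1 h).le⟩ ⟨hB.2, hB.1, hZS.1⟩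

end Predecessors

theorem measure_diff_le_mul_of_le {Ω : Type*} [MeasurableSpace Ω] {μ : Measure Ω} {s t : Set Ω}
    (hts : t ⊆ s) (ht : NullMeasurableSet t μ) (hs : μ s ≠ ∞) {c : ℝ≥0∞}
    (h : (1 - c) * μ s ≤ μ t) : μ (s \ t) ≤ c * μ s := by
  rw [measure_sdiff hts ht (ne_top_of_le_ne_top hs (measure_mono hts)), tsub_le_iff_right]
  calc μ s = 1 * μ s := (one_mul _).symm
    _ ≤ (c + (1 - c)) * μ s := by gcongr; exact le_add_tsub
    _ ≤ c * μ s + μ t := by rw [add_mul]; gcongr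

namespace Paper

section Generations

variable {Ω : Type*} {R : Set (Set Ω)}

theorem eq_of_mem_G1_of_nonempty_inter (hR : Nested R) {S E Z : Set Ω} (hE : E ∈ G1 R S)
    (hZ : Z ∈ G1 R S) (hEZ : (E ∩ Z).Nonempty) : E = Z := by
  rcases hR E hE.1 Z hZ.1 hEZ with h | h
  · exact hE.2.2 Z hZ.1 hZ.2.1 h
  · exact (hZ.2.2 E hE.1 hE.2.1 h).symm

theorem mem_Gk_succ {k : ℕ} {S E : Set Ω} : E ∈ Gk R (k + 1) S ↔ ∃ J ∈ Gk R k S, E ∈ G1 R J := by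
  simp [Gk]

theorem Gk_subset_insert (k : ℕ) (S : Set Ω) : Gk R k S ⊆ insert S R := by
  cases k with
  | zero => simp [Gk]
  | succ k => exact fun E hE => Or.inr (mem_Gk_succ.1 hE).choose_spec.2.1

theorem antitone_sUnion_Gk (S : Set Ω) : Antitone fun k => ⋃₀ Gk R k S := by
  refine antitone_nat_of_succ_le fun k => sUnion_subset fun E hE => ?_
  obtain ⟨J, hJ, hEJ⟩ := mem_Gk_succ.1 hE
  exact hEJ.2.1.subset.trans (subset_sUnion_of_mem hJ)

theorem mem_Gk_of_mem_Gk_succ (hR : Nested R) {S Z : Set Ω} (hZ : Z ∈ G1 R S) {k : ℕ}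
    {E : Set Ω} (hE : E ∈ Gk R (k + 1) S) (hEZ : (E ∩ Z).Nonempty) : E ∈ Gk R k Z := by
  induction k generalizing E with
  | zero =>
    simp only [Gk, mem_singleton_iff]
    exact eq_of_mem_G1_of_nonempty_inter hR (by simpa [Gk] using hE) hZ hEZ
  | succ k ih =>
    obtain ⟨J, hJ, hEJ⟩ := mem_Gk_succ.1 hE
    exact mem_Gk_succ.2 ⟨J, ih hJ (hEZ.mono (inter_subset_inter_left Z hEJ.2.1.subset)), hEJ⟩

variable {Y : ℕ → Set Ω} {m : ℕ}

theorem subset_of_chain (hY : ∀ j ∈ Finset.Icc 1 m, Y j ∈ G1 R (Y (j - 1))) :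
    ∀ j ≤ m, Y j ⊆ Y 0 := by
  intro j hj
  induction j with
  | zero => exact subset_rfl
  | succ j ih => exact (hY (j + 1) (by simp; omega)).2.1.subset.trans (ih (by omega))

theorem sUnion_Gk_inter_subset_of_chain (hR : Nested R)
    (hY : ∀ j ∈ Finset.Icc 1 m, Y j ∈ G1 R (Y (j - 1))) :
    ∀ j ≤ m, ∀ k, ⋃₀ Gk R (j + k) (Y 0) ∩ Y j ⊆ ⋃₀ Gk R k (Y j) := by
  intro j hj
  induction j with
  | zero => simp
  | succ j ih =>
    intro k x ⟨⟨E, hE, hxE⟩, hx⟩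
    have hstep : Y (j + 1) ∈ G1 R (Y j) := hY (j + 1) (by simp; omega)
    rw [show j + 1 + k = j + (k + 1) by omega] at hE
    obtain ⟨J, hJ, hxJ⟩ := ih (by omega) (k + 1) ⟨⟨E, hE, hxE⟩, hstep.2.1.subset hx⟩
    exact ⟨J, mem_Gk_of_mem_Gk_succ hR hstep hJ ⟨x, hxJ, hx⟩, hxJ⟩

theorem diff_sUnion_G1_subset_of_chain (hR : Nested R)
    (hY : ∀ j ∈ Finset.Icc 1 m, Y j ∈ G1 R (Y (j - 1))) {k : ℕ} (hmk : m < k) :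
    Y m \ ⋃₀ G1 R (Y m) ⊆ Y 0 \ ⋃₀ Gk R k (Y 0) := by
  refine fun x ⟨hxY, hxG⟩ => ⟨subset_of_chain hY m le_rfl hxY, fun hxk => hxG ?_⟩
  have hx := sUnion_Gk_inter_subset_of_chain hR hY m le_rfl (k - m)
    ⟨by rwa [show m + (k - m) = k by omega], hxY⟩
  simpa [Gk] using antitone_sUnion_Gk (R := R) (Y m) (show 1 ≤ k - m by omega) hx

end Generations

namespace FilteredAtomic

variable {Ω : Type*} [MeasurableSpace Ω] {P : Measure Ω} (F : FilteredAtomic Ω P)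

theorem mem_atoms_iff {A : Set Ω} : A ∈ F.atoms ↔ ∃ n, A ∈ F.part n := by
  simp [atoms]

theorem countable_atoms : F.atoms.Countable :=
  countable_iUnion fun n => (F.part n).countable_toSet

theorem eColl_subset_atoms : F.eColl ⊆ F.atoms := fun _ h => h.1

theorem measurableSet_sUnion {S : Set (Set Ω)} (hS : S ⊆ F.atoms) : MeasurableSet (⋃₀ S) :=
  .sUnion (F.countable_atoms.mono hS) fun A hA =>
    let ⟨n, hn⟩ := F.mem_atoms_iff.1 (hS hA); F.meas n A hn

theorem pos_of_mem_atoms {A : Set Ω} (hA : A ∈ F.atoms) : 0 < P A :=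
  let ⟨n, hn⟩ := F.mem_atoms_iff.1 hA; F.pos n A hn

theorem nonempty_of_mem_part {n : ℕ} {A : Set Ω} (hA : A ∈ F.part n) : A.Nonempty :=
  nonempty_of_measure_ne_zero (F.pos n A hA).ne'

theorem exists_superset_of_le {p q : ℕ} (hpq : p ≤ q) {B : Set Ω} (hB : B ∈ F.part q) :
    ∃ C ∈ F.part p, B ⊆ C := by
  induction q, hpq using Nat.le_induction generalizing B with
  | base => exact ⟨B, hB, subset_rfl⟩
  | succ q _ ih =>
    obtain ⟨C, hC, hBC⟩ := F.refined q B hB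
    obtain ⟨D, hD, hCD⟩ := ih hC
    exact ⟨D, hD, hBC.trans hCD⟩

theorem subset_of_le {p q : ℕ} {A B : Set Ω} (hA : A ∈ F.part p) (hB : B ∈ F.part q)
    (hpq : p ≤ q) (hAB : (A ∩ B).Nonempty) : B ⊆ A := by
  obtain ⟨C, hC, hBC⟩ := F.exists_superset_of_le hpq hB
  obtain ⟨x, hxA, hxB⟩ := hAB
  obtain rfl : A = C := (F.disj p).elim hA hC (not_disjoint_iff.2 ⟨x, hxA, hBC hxB⟩)
  exact hBC

theorem nested_atoms : Nested F.atoms := by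
  intro A hA B hB hAB
  obtain ⟨p, hp⟩ := F.mem_atoms_iff.1 hA
  obtain ⟨q, hq⟩ := F.mem_atoms_iff.1 hB
  rcases le_total p q with h | h
  · exact Or.inr (F.subset_of_le hp hq h hAB)
  · exact Or.inl (F.subset_of_le hq hp h (inter_comm A B ▸ hAB))

theorem nested_eColl : Nested F.eColl :=
  fun A hA B hB => F.nested_atoms A hA.1 B hB.1

theorem exists_subset_of_le {l n : ℕ} (hln : l ≤ n) {B : Set Ω} (hB : B ∈ F.part l) :
    ∃ W ∈ F.part n, W ⊆ B := by
  obtain ⟨x, hx⟩ := F.nonempty_of_mem_part hB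
  obtain ⟨W, hW, hxW⟩ := mem_sUnion.1 (F.cover n ▸ mem_univ x)
  exact ⟨W, hW, F.subset_of_le hB hW hln ⟨x, hx, hxW⟩⟩

section InjOn

variable {F}

/- If `B` survived into generation `l + 1`, it would be its own largest child: `star l B = B`. -/
theorem notMem_part_succ_of_mem_eColl (hinj : InjOn P F.atoms) {l : ℕ} {B : Set Ω}
    (hB : B ∈ F.eColl) (hl : B ∈ F.part l) : B ∉ F.part (l + 1) := by
  intro hl'
  have hstar : F.star l B ∈ F.atoms := F.mem_atoms_iff.2 ⟨l + 1, F.star_mem l B hl⟩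
  have heq : F.star l B = B := hinj hstar (F.mem_atoms_iff.2 ⟨l, hl⟩)
    (le_antisymm (measure_mono (F.star_sub l B hl)) (F.star_max l B hl B hl' subset_rfl))
  exact hB.2 ⟨l, B, hl, heq.symm⟩

theorem notMem_part_of_lt (hinj : InjOn P F.atoms) {l n : ℕ} {B : Set Ω} (hB : B ∈ F.eColl)
    (hl : B ∈ F.part l) (hln : l < n) : B ∉ F.part n := by
  intro hn
  obtain ⟨C, hC, hBC⟩ := F.exists_superset_of_le hln hn
  obtain ⟨x, hx⟩ := F.nonempty_of_mem_part hl
  have hCB : C ⊆ B := F.subset_of_le hl hC l.le_succ ⟨x, hx, hBC hx⟩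
  exact notMem_part_succ_of_mem_eColl hinj hB hl (subset_antisymm hBC hCB ▸ hC)

theorem level_eq_of_mem_eColl (hinj : InjOn P F.atoms) {l n : ℕ} {B : Set Ω}
    (hB : B ∈ F.eColl) (hl : B ∈ F.part l) (hn : B ∈ F.part n) : l = n := by
  rcases lt_trichotomy l n with h | h | h
  · exact absurd hn (notMem_part_of_lt hinj hB hl h)
  · exact h
  · exact absurd hl (notMem_part_of_lt hinj hB hn h)

theorem prec_trans (hinj : InjOn P F.atoms) {B₁ B₂ B₃ : Set Ω} (h₂ : B₂ ∈ F.eColl)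
    (h₁₂ : Prec F B₁ B₂) (h₂₃ : Prec F B₂ B₃) : Prec F B₁ B₃ := by
  obtain ⟨l₁, m₁, hl₁, hm₁, h₁⟩ := h₁₂
  obtain ⟨l₂, m₂, hl₂, hm₂, h₂'⟩ := h₂₃
  obtain rfl := level_eq_of_mem_eColl hinj h₂ hm₁ hl₂
  refine ⟨l₁, m₂, hl₁, hm₂, ?_⟩
  rcases h₁ with h₁ | ⟨rfl, h₁⟩ <;> rcases h₂' with h₂' | ⟨rfl, h₂'⟩
  · exact Or.inl (h₁.trans h₂')
  · exact Or.inl h₁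
  · exact Or.inl h₂'
  · exact Or.inr ⟨rfl, h₂'.trans h₁⟩

theorem prec_total (hinj : InjOn P F.atoms) {B₁ B₂ : Set Ω} (h₁ : B₁ ∈ F.atoms)
    (h₂ : B₂ ∈ F.atoms) (hne : B₁ ≠ B₂) :
    Prec F B₁ B₂ ∨ Prec F B₂ B₁ := by
  obtain ⟨p, hp⟩ := F.mem_atoms_iff.1 h₁
  obtain ⟨q, hq⟩ := F.mem_atoms_iff.1 h₂
  rcases lt_trichotomy p q with h | rfl | h
  · exact Or.inl ⟨p, q, hp, hq, Or.inl h⟩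
  · rcases (hinj.ne h₁ h₂ hne).lt_or_gt with h | h
    · exact Or.inr ⟨p, p, hq, hp, Or.inr ⟨rfl, h⟩⟩
    · exact Or.inl ⟨p, p, hp, hq, Or.inr ⟨rfl, h⟩⟩
  · exact Or.inr ⟨q, p, hq, hp, Or.inl h⟩

theorem wellFoundedOn_prec (hinj : InjOn P F.atoms) : F.eColl.WellFoundedOn (Prec F) := by
  classical
  rw [wellFoundedOn_iff, WellFounded.wellFounded_iff_has_min]
  intro S ⟨Z₀, hZ₀⟩
  by_cases hSE : (S ∩ F.eColl).Nonempty
  swap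
  · exact ⟨Z₀, hZ₀, fun B _ h => hSE ⟨Z₀, hZ₀, h.2.2⟩⟩
  have hlev : ∃ n, ∃ Z ∈ S ∩ F.eColl, Z ∈ F.part n :=
    let ⟨Z, hZ⟩ := hSE; let ⟨n, hn⟩ := F.mem_atoms_iff.1 hZ.2.1; ⟨n, Z, hZ, hn⟩
  obtain ⟨Z, hZ, hZmax⟩ := exists_max_image {Z | Z ∈ S ∩ F.eColl ∧ Z ∈ F.part (Nat.find hlev)} P
    ((F.part _).finite_toSet.subset fun Z hZ => hZ.2) (Nat.find_spec hlev)
  refine ⟨Z, hZ.1.1, fun B hBS ⟨⟨l, n, hBl, hZn, hlt⟩, hBE, hZE⟩ => ?_⟩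
  obtain rfl := level_eq_of_mem_eColl hinj hZE hZ.2 hZn
  rcases hlt with hlt | ⟨rfl, hlt⟩
  · exact Nat.find_min hlev hlt ⟨B, ⟨hBS, hBE⟩, hBl⟩
  · exact (hZmax B ⟨⟨hBS, hBE⟩, hBl⟩).not_gt hlt

theorem exists_measure_sUnion_diff_sUnion_le [IsFiniteMeasure P] {G : Set (Set Ω)}
    (hG : G ⊆ F.atoms) {δ : ℝ≥0∞} (hδ : 0 < δ) :
    ∃ N, P (⋃₀ G \ ⋃₀ {B | B ∈ G ∧ ∃ n ≤ N, B ∈ F.part n}) ≤ δ := by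
  set s : ℕ → Set Ω := fun N => ⋃₀ G \ ⋃₀ {B | B ∈ G ∧ ∃ n ≤ N, B ∈ F.part n}
  have hanti : Antitone s := fun N N' h => sdiff_subset_sdiff_right
    (sUnion_mono fun B ⟨hB, n, hn, hBn⟩ => ⟨hB, n, hn.trans h, hBn⟩)
  have hempty : ⋂ N, s N = ∅ := by
    refine eq_empty_of_forall_notMem fun x hx => ?_
    obtain ⟨B, hB, hxB⟩ := (mem_iInter.1 hx 0).1
    obtain ⟨n, hn⟩ := F.mem_atoms_iff.1 (hG hB)
    exact (mem_iInter.1 hx n).2 ⟨B, ⟨hB, n, le_rfl, hn⟩, hxB⟩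
  have hmeas (N : ℕ) : NullMeasurableSet (s N) P :=
    ((F.measurableSet_sUnion hG).diff
      (F.measurableSet_sUnion fun B hB => hG hB.1)).nullMeasurableSet
  have hlim := tendsto_measure_iInter_atTop hmeas hanti ⟨0, measure_ne_top _ _⟩
  rw [hempty, measure_empty] at hlim
  obtain ⟨N, hN⟩ := ENNReal.tendsto_atTop_zero.1 hlim δ hδ
  exact ⟨N, hN N le_rfl⟩

theorem exists_ssubset_measure_sUnion_G1_diff_le [IsFiniteMeasure P] (hinj : InjOn P F.atoms)
    {Y : Set Ω} (hY : Y ∈ F.eColl) {δ : ℝ≥0∞} (hδ : 0 < δ) :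
    ∃ W ∈ F.atoms, W ⊂ Y ∧
      P (⋃₀ G1 F.eColl Y \ ⋃₀ {B | B ∈ G1 F.eColl Y ∧ Prec F B W}) ≤ δ := by
  obtain ⟨l, hl⟩ := F.mem_atoms_iff.1 hY.1
  obtain ⟨N, hN⟩ :=
    F.exists_measure_sUnion_diff_sUnion_le (G := G1 F.eColl Y) (fun B hB => hB.1.1) hδ
  obtain ⟨W, hW, hWY⟩ := F.exists_subset_of_le (show l ≤ max N l + 1 by omega) hl
  refine ⟨W, F.mem_atoms_iff.2 ⟨_, hW⟩, hWY.ssubset_of_ne ?_, (measure_mono ?_).trans hN⟩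
  · rintro rfl
    exact notMem_part_of_lt hinj hY hl (by omega) hW
  · exact sdiff_subset_sdiff_right
      (sUnion_mono fun B ⟨hB, n, hn, hBn⟩ => ⟨hB, n, _, hBn, hW, Or.inl (by omega)⟩)

end InjOn

end FilteredAtomic

section CondD

variable {Ω : Type*} [MeasurableSpace Ω] {P : Measure Ω} {F : FilteredAtomic Ω P}
  {A : Set Ω} {Y : ℕ → Set Ω} {m : ℕ} {Z : Set Ω}

theorem Uset_update_of_le {j : ℕ} (hj : j ≤ m) :
    Uset F (Function.update Y (m + 1) Z) j = Uset F Y j := by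
  rw [Uset, Uset, Function.update_of_ne (by omega), Function.update_of_ne (by omega)]

theorem Uset_update_succ :
    Uset F (Function.update Y (m + 1) Z) (m + 1) = {B | B ∈ G1 F.eColl (Y m) ∧ Prec F B Z} := by
  rw [Uset, Nat.add_sub_cancel, Function.update_self, Function.update_of_ne (by omega)]

theorem sum_Uset_update :
    ∑ j ∈ Finset.Icc 1 (m + 1), P (⋃₀ Uset F (Function.update Y (m + 1) Z) j) =
      ∑ j ∈ Finset.Icc 1 m, P (⋃₀ Uset F Y j) +
        P (⋃₀ {B | B ∈ G1 F.eColl (Y m) ∧ Prec F B Z}) := by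
  rw [Finset.sum_Icc_succ_top (by omega), Uset_update_succ]
  congr 1
  exact Finset.sum_congr rfl fun j hj => by rw [Uset_update_of_le (Finset.mem_Icc.1 hj).2]

theorem CondD.update (hD : CondD F A Y m) (hZ : Z ∈ G1 F.eColl (Y m))
    (hle : ∑ j ∈ Finset.Icc 1 m, P (⋃₀ Uset F Y j) +
      P (⋃₀ {B | B ∈ G1 F.eColl (Y m) ∧ Prec F B Z}) ≤ 2⁻¹ * P A)
    (hge : 2⁻¹ * P A ≤ P Z + (∑ j ∈ Finset.Icc 1 m, P (⋃₀ Uset F Y j) +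
      P (⋃₀ {B | B ∈ G1 F.eColl (Y m) ∧ Prec F B Z}))) :
    CondD F A (Function.update Y (m + 1) Z) (m + 1) := by
  obtain ⟨hY0, hchain, -, -⟩ := hD
  refine ⟨by rwa [Function.update_of_ne (by omega)], fun j hj => ?_, by rwa [sum_Uset_update],
    by rwa [sum_Uset_update, Function.update_self]⟩
  obtain ⟨hj1, hjm⟩ := Finset.mem_Icc.1 hj
  rcases eq_or_lt_of_le hjm with rfl | hjm
  · rwa [Function.update_self, Nat.add_sub_cancel, Function.update_of_ne (by omega)]
  · rw [Function.update_of_ne (by omega), Function.update_of_ne (by omega)]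
    exact hchain j (Finset.mem_Icc.2 ⟨hj1, by omega⟩)

theorem CondD.exists_update (hinj : InjOn P F.atoms) (hD : CondD F A Y m)
    (ha : 2⁻¹ * P A <
      ∑ j ∈ Finset.Icc 1 m, P (⋃₀ Uset F Y j) + P (⋃₀ G1 F.eColl (Y m))) :
    ∃ Z ∈ G1 F.eColl (Y m), CondD F A (Function.update Y (m + 1) Z) (m + 1) := by
  set S₀ := ∑ j ∈ Finset.Icc 1 m, P (⋃₀ Uset F Y j)
  have hup : S₀ ≤ 2⁻¹ * P A := hD.2.2.1
  have hGE : G1 F.eColl (Y m) ⊆ F.eColl := fun _ hB => hB.1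
  obtain ⟨Z, hZ, hle, hge⟩ := exists_mem_measure_predecessors_le_and_le_add (r := Prec F)
    (F.countable_atoms.mono (hGE.trans F.eColl_subset_atoms))
    (fun _ _ _ hb _ _ => FilteredAtomic.prec_trans hinj (hGE hb))
    (fun _ ha _ hb => FilteredAtomic.prec_total hinj (F.eColl_subset_atoms (hGE ha))
      (F.eColl_subset_atoms (hGE hb)))
    ((FilteredAtomic.wellFoundedOn_prec hinj).subset hGE)
    (ENNReal.sub_lt_of_lt_add hup (by rwa [add_comm]) :
      2⁻¹ * P A - S₀ < P (⋃₀ G1 F.eColl (Y m)))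
  have hsplit : S₀ + (2⁻¹ * P A - S₀) = 2⁻¹ * P A := add_tsub_cancel_of_le hup
  refine ⟨Z, hZ, hD.update hZ ?_ ?_⟩
  · calc _ ≤ S₀ + (2⁻¹ * P A - S₀) := by gcongr
      _ = 2⁻¹ * P A := hsplit
  · calc 2⁻¹ * P A = S₀ + (2⁻¹ * P A - S₀) := hsplit.symm
      _ ≤ S₀ + (P (⋃₀ {B | B ∈ G1 F.eColl (Y m) ∧ Prec F B Z}) + P Z) := by gcongr
      _ = _ := by ring

theorem CondD.measure_diff_sUnion_G1_le [IsFiniteMeasure P] (hD : CondD F A Y m)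
    (hA : A ∈ F.atoms) {k : ℕ} (hmk : m < k) {c : ℝ≥0∞}
    (hbig : (1 - c) * P A ≤ P (⋃₀ Gk F.eColl k A)) :
    P (Y m \ ⋃₀ G1 F.eColl (Y m)) ≤ c * P A := by
  obtain ⟨hY0, hchain, -, -⟩ := hD
  have hGk : ⋃₀ Gk F.eColl k A ⊆ A := by
    simpa [Gk] using antitone_sUnion_Gk (R := F.eColl) A (Nat.zero_le k)
  have hmeas : MeasurableSet (⋃₀ Gk F.eColl k A) := F.measurableSet_sUnion
    ((Gk_subset_insert k A).trans (insert_subset hA F.eColl_subset_atoms))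
  calc P (Y m \ ⋃₀ G1 F.eColl (Y m)) ≤ P (A \ ⋃₀ Gk F.eColl k A) :=
        measure_mono (hY0 ▸ diff_sUnion_G1_subset_of_chain F.nested_eColl hchain hmk)
    _ ≤ c * P A := measure_diff_le_mul_of_le hGk hmeas.nullMeasurableSet (measure_ne_top P A) hbig

theorem CondD.exists_ssubset_measure_diff_le [IsFiniteMeasure P] (hinj : InjOn P F.atoms)
    (hD : CondD F A Y m) (hm0 : 0 < m)
    (hb : ∑ j ∈ Finset.Icc 1 m, P (⋃₀ Uset F Y j) + P (⋃₀ G1 F.eColl (Y m)) ≤ 2⁻¹ * P A)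
    {δ : ℝ≥0∞} (hδ : 0 < δ) (hgap : P (Y m \ ⋃₀ G1 F.eColl (Y m)) ≤ δ) :
    ∃ W ∈ F.atoms, W ⊂ Y m ∧
      2⁻¹ * P A ≤ ∑ j ∈ Finset.Icc 1 m, P (⋃₀ Uset F Y j) +
        P (⋃₀ {B | B ∈ G1 F.eColl (Y m) ∧ Prec F B W}) + (δ + δ) ∧
      ∑ j ∈ Finset.Icc 1 m, P (⋃₀ Uset F Y j) +
        P (⋃₀ {B | B ∈ G1 F.eColl (Y m) ∧ Prec F B W}) ≤ 2⁻¹ * P A ∧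
      P (Y m \ ⋃₀ {B | B ∈ G1 F.eColl (Y m) ∧ Prec F B W}) ≤ δ + δ := by
  obtain ⟨-, hchain, -, hlo⟩ := hD
  obtain ⟨W, hW, hWY, hWU⟩ := FilteredAtomic.exists_ssubset_measure_sUnion_G1_diff_le hinj
    (hchain m (Finset.mem_Icc.2 ⟨hm0, le_rfl⟩)).1 hδ
  set U := {B | B ∈ G1 F.eColl (Y m) ∧ Prec F B W}
  have hrest : P (Y m \ ⋃₀ U) ≤ δ + δ :=
    (measure_mono (sdiff_triangle _ (⋃₀ G1 F.eColl (Y m)) _)).trans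
      ((measure_union_le _ _).trans (add_le_add hgap hWU))
  refine ⟨W, hW, hWY, ?_,
    (add_le_add le_rfl (measure_mono (sUnion_mono fun B hB => hB.1))).trans hb, hrest⟩
  calc 2⁻¹ * P A ≤ P (Y m) + ∑ j ∈ Finset.Icc 1 m, P (⋃₀ Uset F Y j) := hlo
    _ ≤ P (⋃₀ U) + (δ + δ) + ∑ j ∈ Finset.Icc 1 m, P (⋃₀ Uset F Y j) := by
      gcongr
      exact (measure_le_inter_add_sdiff P (Y m) (⋃₀ U)).trans
        (add_le_add (measure_mono inter_subset_right) hrest)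
    _ = _ := by ring

end CondD

end Paper

open MeasureTheory ENNReal in
theorem statement_4_general {Ω : Type*} [m0 : MeasurableSpace Ω] (P : Measure Ω)
    [IsProbabilityMeasure P] (F : Paper.FilteredAtomic Ω P)
    (hdist : ∀ A ∈ F.atoms, ∀ B ∈ F.atoms, P A = P B → A = B)
    (ε : ℝ) (hε0 : 0 < ε)
    (k : ℕ)
    (A : Set Ω) (hA : A ∈ F.atoms)
    (hbig : ENNReal.ofReal (1 - ε / 2) * P A < P (⋃₀ Paper.Gk F.eColl k A))
    (m : ℕ) (hm0 : 0 < m) (hmk : m < k)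
    (Y : ℕ → Set Ω) (hD : Paper.CondD F A Y m) :
    -- (a)
    (2⁻¹ * P A <
        ∑ j ∈ Finset.Icc 1 m, P (⋃₀ Paper.Uset F Y j) + P (⋃₀ Paper.G1 F.eColl (Y m)) →
      ∃ Z ∈ Paper.G1 F.eColl (Y m),
        Paper.CondD F A (Function.update Y (m + 1) Z) (m + 1)) ∧
    -- (b)
    (∑ j ∈ Finset.Icc 1 m, P (⋃₀ Paper.Uset F Y j) + P (⋃₀ Paper.G1 F.eColl (Y m)) ≤
        2⁻¹ * P A →
      ∃ W ∈ F.atoms, W ⊂ Y m ∧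
        (ENNReal.ofReal (1 / 2 - ε) * P A ≤
            ∑ j ∈ Finset.Icc 1 m, P (⋃₀ Paper.Uset F Y j) +
              P (⋃₀ {B | B ∈ Paper.G1 F.eColl (Y m) ∧ Paper.Prec F B W}) ∧
          ∑ j ∈ Finset.Icc 1 m, P (⋃₀ Paper.Uset F Y j) +
              P (⋃₀ {B | B ∈ Paper.G1 F.eColl (Y m) ∧ Paper.Prec F B W}) ≤ 2⁻¹ * P A ∧
          P (Y m \ ⋃₀ {B | B ∈ Paper.G1 F.eColl (Y m) ∧ Paper.Prec F B W}) ≤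
            ENNReal.ofReal ε * P A)) := by
  have hinj : Set.InjOn P F.atoms := fun A hA B hB => hdist A hA B hB
  have hPA : P A ≠ ∞ := measure_ne_top P A
  refine ⟨hD.exists_update hinj, fun hb => ?_⟩
  have hδ : 0 < ENNReal.ofReal (ε / 2) * P A :=
    ENNReal.mul_pos (ENNReal.ofReal_pos.2 (by positivity)).ne' (F.pos_of_mem_atoms hA).ne'
  have hgap := hD.measure_diff_sUnion_G1_le hA hmk (c := ENNReal.ofReal (ε / 2))
    (by rw [← ENNReal.ofReal_one, ← ENNReal.ofReal_sub _ (by positivity)]; exact hbig.le)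
  obtain ⟨W, hW, hWY, hlow, hup, hrest⟩ := hD.exists_ssubset_measure_diff_le hinj hm0 hb hδ hgap
  have hε : ENNReal.ofReal (ε / 2) * P A + ENNReal.ofReal (ε / 2) * P A =
      ENNReal.ofReal ε * P A := by
    rw [← add_mul, ← ENNReal.ofReal_add (by positivity) (by positivity), add_halves]
  rw [hε] at hlow hrest
  refine ⟨W, hW, hWY, ?_, hup, hrest⟩
  rwa [ENNReal.ofReal_sub _ hε0.le, one_div, ENNReal.ofReal_inv_of_pos two_pos,
    ENNReal.ofReal_ofNat, ENNReal.sub_mul fun _ _ => hPA, tsub_le_iff_right]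

open MeasureTheory ENNReal in
/-- the greedy-algorithm inductive step, Lemma 5 of the paper. -/
theorem statement_4 {Ω : Type*} [m0 : MeasurableSpace Ω] (P : Measure Ω)
    [IsProbabilityMeasure P] (F : Paper.FilteredAtomic Ω P)
    (hdist : ∀ A ∈ F.atoms, ∀ B ∈ F.atoms, P A = P B → A = B)
    (ε : ℝ) (hε0 : 0 < ε) (hε : ε < 1 / 2)
    (k : ℕ) (hk : -Real.logb 2 ε < (k : ℝ))
    (A : Set Ω) (hA : A ∈ F.atoms)
    (hbig : ENNReal.ofReal (1 - ε / 2) * P A < P (⋃₀ Paper.Gk F.eColl k A))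
    (m : ℕ) (hm0 : 0 < m) (hmk : m < k)
    (Y : ℕ → Set Ω) (hD : Paper.CondD F A Y m) :
    -- (a)
    (2⁻¹ * P A <
        ∑ j ∈ Finset.Icc 1 m, P (⋃₀ Paper.Uset F Y j) + P (⋃₀ Paper.G1 F.eColl (Y m)) →
      ∃ Z ∈ Paper.G1 F.eColl (Y m),
        Paper.CondD F A (Function.update Y (m + 1) Z) (m + 1)) ∧
    -- (b)
    (∑ j ∈ Finset.Icc 1 m, P (⋃₀ Paper.Uset F Y j) + P (⋃₀ Paper.G1 F.eColl (Y m)) ≤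
        2⁻¹ * P A →
      ∃ W ∈ F.atoms, W ⊂ Y m ∧
        (ENNReal.ofReal (1 / 2 - ε) * P A ≤
            ∑ j ∈ Finset.Icc 1 m, P (⋃₀ Paper.Uset F Y j) +
              P (⋃₀ {B | B ∈ Paper.G1 F.eColl (Y m) ∧ Paper.Prec F B W}) ∧
          ∑ j ∈ Finset.Icc 1 m, P (⋃₀ Paper.Uset F Y j) +
              P (⋃₀ {B | B ∈ Paper.G1 F.eColl (Y m) ∧ Paper.Prec F B W}) ≤ 2⁻¹ * P A ∧
          P (Y m \ ⋃₀ {B | B ∈ Paper.G1 F.eColl (Y m) ∧ Paper.Prec F B W}) ≤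
            ENNReal.ofReal ε * P A)) :=
  statement_4_general (m0 := m0) P F hdist ε hε0 k A hA hbig m hm0 hmk Y hD
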